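/- arXiv:2207.09637 — 2 statements merged into one kernel-verified Lean document; each statement's English description precedes it below -/
import Mathlib

section
/- For all complex numbers z and λ, the double series Σ_{p≥0} Σ_{q≥0} (conj λ)^p λ^q / (p! q!) · J_{p,q}(z) is summable (over ℕ × ℕ) and its sum equals exp(λ · conj z + conj λ · z − 2|λ|²), where J_{p,q}(z) = Σ_{r=0}^{min(p,q)} (−2)^r r! C(p,r) C(q,r) z^{p−r} (conj z)^{q−r}. -/
/-!
Write the exponent as `conj λ · z + λ · conj z − 2 λ conj λ` and multiply the three exponential
series: the term indexed by `(a, b, r)` is the `r`-th summand of `J_{a+r,b+r}(z)` times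
`(conj λ)^{a+r} λ^{b+r} / ((a+r)! (b+r)!)`, because `C(a+r,r) / (a+r)! = 1 / (a! r!)`.
Absolute convergence of the triple series lets us reindex by `(p, q, r) = (a+r, b+r, r)` and sum
over `r` first, which yields the double series of the complex Hermite polynomials.
-/

open scoped ComplexConjugate

/-- The complex Hermite (Hermite–Laguerre–Itô) polynomial
`J_{p,q}(z) = Σ_{r=0}^{min(p,q)} (−2)^r r! C(p,r) C(q,r) z^{p−r} (conj z)^{q−r}`. -/
noncomputable def complexHermite (p q : ℕ) (z : ℂ) : ℂ :=
  ∑ r ∈ Finset.range (min p q + 1),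
    (-2 : ℂ) ^ r * (r.factorial : ℂ) * (p.choose r : ℂ) * (q.choose r : ℂ) *
      z ^ (p - r) * (conj z) ^ (q - r)

open scoped Nat

theorem HasSum.mul_of_summable_norm {ι κ R : Type*} [NormedRing R] [CompleteSpace R]
    {f : ι → R} {g : κ → R} {a b : R} (hf : HasSum f a) (hg : HasSum g b)
    (hf' : Summable (‖f ·‖)) (hg' : Summable (‖g ·‖)) :
    HasSum (fun x : ι × κ ↦ f x.1 * g x.2) (a * b) :=
  hf.mul hg (summable_mul_of_summable_norm hf' hg')

theorem hasSum_exp_mul_exp_mul_exp {𝔸 : Type*} [NormedDivisionRing 𝔸] [NormedAlgebra ℚ 𝔸]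
    [CompleteSpace 𝔸] (u v w : 𝔸) :
    HasSum (fun x : (ℕ × ℕ) × ℕ ↦
        u ^ x.1.1 / (x.1.1 ! : 𝔸) * (v ^ x.1.2 / (x.1.2 ! : 𝔸)) * (w ^ x.2 / (x.2 ! : 𝔸)))
      (NormedSpace.exp u * NormedSpace.exp v * NormedSpace.exp w) := by
  let e (y : 𝔸) (n : ℕ) : 𝔸 := y ^ n / (n ! : 𝔸)
  have hsum (y : 𝔸) : HasSum (e y) (NormedSpace.exp y) := NormedSpace.expSeries_div_hasSum_exp y
  have hnorm (y : 𝔸) : Summable (‖e y ·‖) := NormedSpace.norm_expSeries_div_summable y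
  have huv : HasSum (fun x : ℕ × ℕ ↦ e u x.1 * e v x.2) (NormedSpace.exp u * NormedSpace.exp v) :=
    (hsum u).mul_of_summable_norm (hsum v) (hnorm u) (hnorm v)
  -- `(· :)` elaborates the term before unifying with the goal; the other order is very slow.
  exact (huv.mul_of_summable_norm (hsum w) ((hnorm u).mul_norm (hnorm v)) (hnorm w) :)

theorem hasSum_comp_add_diag_iff {M : Type*} [AddCommMonoid M] [TopologicalSpace M]
    {f : (ℕ × ℕ) × ℕ → M} {a : M} (hf : ∀ p q r, p < r ∨ q < r → f ((p, q), r) = 0) :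
    HasSum (fun x : (ℕ × ℕ) × ℕ ↦ f ((x.1.1 + x.2, x.1.2 + x.2), x.2)) a ↔ HasSum f a := by
  refine Function.Injective.hasSum_iff
    (g := fun x : (ℕ × ℕ) × ℕ ↦ ((x.1.1 + x.2, x.1.2 + x.2), x.2)) ?_ ?_
  · rintro ⟨⟨a, b⟩, r⟩ ⟨⟨a', b'⟩, r'⟩ h
    simp only [Prod.mk.injEq] at h ⊢
    omega
  · rintro ⟨⟨p, q⟩, r⟩ hpqr
    refine hf p q r (by_contra fun h ↦ hpqr ⟨((p - r, q - r), r), ?_⟩)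
    simp only [Prod.mk.injEq, and_true]
    omega

noncomputable def complexHermiteTerm (p q r : ℕ) (z : ℂ) : ℂ :=
  (-2 : ℂ) ^ r * (r ! : ℂ) * (p.choose r : ℂ) * (q.choose r : ℂ) * z ^ (p - r) * (conj z) ^ (q - r)

theorem complexHermiteTerm_eq_zero {p q r : ℕ} (h : p < r ∨ q < r) (z : ℂ) :
    complexHermiteTerm p q r z = 0 := by
  rcases h with h | h <;> simp [complexHermiteTerm, Nat.choose_eq_zero_of_lt h]

theorem hasSum_complexHermiteTerm (p q : ℕ) (z : ℂ) :
    HasSum (complexHermiteTerm p q · z) (complexHermite p q z) :=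
  hasSum_sum_of_ne_finset_zero fun r hr ↦ complexHermiteTerm_eq_zero (by simp at hr; omega) z

theorem pow_mul_pow_div_mul_complexHermiteTerm_add (z lam : ℂ) (a b r : ℕ) :
    conj lam ^ (a + r) * lam ^ (b + r) / ((a + r)! * (b + r)!) *
        complexHermiteTerm (a + r) (b + r) r z =
      (conj lam * z) ^ a / a ! * ((lam * conj z) ^ b / b !) * ((-2 * (‖lam‖ : ℂ) ^ 2) ^ r / r !) := by
  rw [complexHermiteTerm, Nat.add_sub_cancel, Nat.add_sub_cancel, ← Nat.choose_symm_add,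
    ← Nat.choose_symm_add, Nat.cast_add_choose, Nat.cast_add_choose, ← Complex.mul_conj']
  field_simp [Nat.factorial_ne_zero]
  ring

/-- **Generating function of the complex Hermite polynomials.**
For all complex numbers `z` and `λ`, the double series
`Σ_{p,q ≥ 0} (conj λ)^p λ^q / (p! q!) · J_{p,q}(z)` is summable over `ℕ × ℕ` and its sum is
`exp(λ conj z + conj λ z − 2|λ|²)`. -/
theorem hasSum_complexHermite_generating (z lam : ℂ) :
    HasSum
      (fun pq : ℕ × ℕ =>
        (conj lam) ^ pq.1 * lam ^ pq.2 / ((pq.1.factorial : ℂ) * (pq.2.factorial : ℂ)) *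
          complexHermite pq.1 pq.2 z)
      (Complex.exp (lam * conj z + conj lam * z - 2 * (‖lam‖ : ℂ) ^ 2)) := by
  have hexp : lam * conj z + conj lam * z - 2 * (‖lam‖ : ℂ) ^ 2 =
      conj lam * z + lam * conj z + -2 * (‖lam‖ : ℂ) ^ 2 := by ring
  rw [hexp, Complex.exp_add, Complex.exp_add, Complex.exp_eq_exp_ℂ]
  refine HasSum.prod_fiberwise (f := fun x : (ℕ × ℕ) × ℕ ↦ conj lam ^ x.1.1 * lam ^ x.1.2 /
      (x.1.1 ! * x.1.2 ! : ℂ) * complexHermiteTerm x.1.1 x.1.2 x.2 z) ?_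
    fun pq ↦ (hasSum_complexHermiteTerm pq.1 pq.2 z).mul_left
      (conj lam ^ pq.1 * lam ^ pq.2 / (pq.1 ! * pq.2 ! : ℂ))
  refine (hasSum_comp_add_diag_iff fun p q r h ↦ ?_).1 ?_
  · simp [complexHermiteTerm_eq_zero h]
  · have htriple :=
      hasSum_exp_mul_exp_mul_exp (conj lam * z) (lam * conj z) (-2 * (‖lam‖ : ℂ) ^ 2)
    exact htriple.congr_fun fun x ↦ pow_mul_pow_div_mul_complexHermiteTerm_add z lam x.1.1 x.1.2 x.2
end

section
/- For every integer n ≥ 0, every real θ, and all real numbers x, y, the probabilist's Hermite polynomials satisfy the rotational invariance H_n(x cos θ + y sin θ) = Σ_{j=0}^{n} C(n,j) (cos θ)^j (sin θ)^{n−j} H_j(x) H_{n−j}(y). -/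
/-!
For a derivation `D` and an element `u` with `D u = 1`, iterating the creation operator
`f ↦ u * f - D f` on `1` produces `Hₙ(u)`: this is `hermite_succ` combined with the chain rule.
In `R[x, y]` take `D = a ∂ₓ + b ∂_y` and `u = a x + b y`, so that `D u = a² + b² = 1`. The creation
operator of `(D, u)` is `a Tₓ + b T_y`, where `Tₓ`, `T_y` are the commuting creation operators of
`(∂ₓ, x)` and `(∂_y, y)`. Expanding `(a Tₓ + b T_y)ⁿ 1` by the binomial theorem gives the sum, since
`Tₓʲ T_yᵏ 1 = Hⱼ(x) Hₖ(y)`. Evaluating at a point of `R²` finishes the proof.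
-/

/-- The probabilist's Hermite polynomial `H_n` evaluated at `x : ℝ`. -/
noncomputable def hermiteEval (n : ℕ) (x : ℝ) : ℝ :=
  Polynomial.aeval x (Polynomial.hermite n)

open Polynomial

section CreationOperator

variable {R A : Type*} [CommRing R] [CommRing A] [Algebra R A]

def creationOp (D : Derivation R A A) (u : A) : Module.End R A :=
  LinearMap.mulLeft R u - D

@[simp]
lemma creationOp_apply (D : Derivation R A A) (u f : A) :
    creationOp D u f = u * f - D f :=
  rfl

-- `hermite n` is mapped to `R[X]` because on `MvPolynomial σ R` the `ℤ`-algebra instance used by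
-- `aeval` on `ℤ[X]` is not reducibly the generic one, which would block `Derivation.map_aeval`.
lemma creationOp_pow_apply {D : Derivation R A A} {u c : A} (hu : D u = 1) (hc : D c = 0)
    (n : ℕ) : (creationOp D u ^ n) c = c * aeval u ((hermite n).map (Int.castRingHom R)) := by
  induction n with
  | zero => simp
  | succ n ih =>
    rw [pow_succ', Module.End.mul_apply, ih, creationOp_apply, D.leibniz, D.map_aeval, hu, hc,
      hermite_succ, Polynomial.map_sub, Polynomial.map_mul, Polynomial.map_X, derivative_map]
    simp only [map_sub, map_mul, aeval_X, smul_eq_mul]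
    ring

lemma creationOp_smul_add_smul (D₁ D₂ : Derivation R A A) (u₁ u₂ : A) (a b : R) :
    creationOp (a • D₁ + b • D₂) (a • u₁ + b • u₂) =
      a • creationOp D₁ u₁ + b • creationOp D₂ u₂ := by
  ext f
  simp only [creationOp_apply, LinearMap.add_apply, LinearMap.smul_apply, Derivation.add_apply,
    Derivation.smul_apply, add_mul, smul_mul_assoc, smul_sub]
  abel

end CreationOperator

namespace MvPolynomial

variable {R σ : Type*} [CommRing R]

lemma pderiv_pderiv_comm (i j : σ) (f : MvPolynomial σ R) :
    pderiv i (pderiv j f) = pderiv j (pderiv i f) := by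
  classical
  have hbracket : ⁅pderiv i, pderiv j⁆ = (0 : Derivation R (MvPolynomial σ R) _) :=
    derivation_ext fun k => by
      rw [Derivation.commutator_apply]
      simp only [pderiv_X, Pi.single_apply]
      split_ifs <;> simp
  simpa [Derivation.commutator_apply, sub_eq_zero] using congr($hbracket f)

lemma commute_creationOp_pderiv {i j : σ} (hij : i ≠ j) :
    Commute (creationOp (pderiv i) (X i : MvPolynomial σ R)) (creationOp (pderiv j) (X j)) := by
  refine LinearMap.ext fun f => ?_
  simp only [Module.End.mul_apply, creationOp_apply, map_sub, Derivation.leibniz, smul_eq_mul,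
    pderiv_X_of_ne hij, pderiv_X_of_ne hij.symm, mul_zero, add_zero, pderiv_pderiv_comm i j]
  ring

lemma pderiv_aeval_X_of_ne {i j : σ} (hij : i ≠ j) (p : R[X]) :
    pderiv i (Polynomial.aeval (X j : MvPolynomial σ R) p) = 0 := by
  rw [Derivation.map_aeval, pderiv_X_of_ne hij.symm, smul_zero]

theorem aeval_hermite_smul_X_add_smul_X {a b : R} (hab : a ^ 2 + b ^ 2 = 1) (n : ℕ) :
    Polynomial.aeval (a • X 0 + b • X 1 : MvPolynomial (Fin 2) R)
        ((hermite n).map (Int.castRingHom R)) =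
      ∑ j ∈ Finset.range (n + 1), (n.choose j * a ^ j * b ^ (n - j)) •
        (Polynomial.aeval (X 0) ((hermite j).map (Int.castRingHom R)) *
          Polynomial.aeval (X 1) ((hermite (n - j)).map (Int.castRingHom R))) := by
  have hu : (a • pderiv 0 + b • pderiv 1 : Derivation R (MvPolynomial (Fin 2) R) _)
      (a • X 0 + b • X 1) = 1 := by
    simp only [map_add, Derivation.map_smul, Derivation.add_apply, Derivation.smul_apply,
      pderiv_X_self, pderiv_X_of_ne zero_ne_one, pderiv_X_of_ne one_ne_zero, smul_zero, add_zero,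
      zero_add, smul_smul]
    rw [← add_smul, ← pow_two, ← pow_two, hab, one_smul]
  have hsplit := creationOp_smul_add_smul (pderiv 0) (pderiv 1)
    (X 0 : MvPolynomial (Fin 2) R) (X 1) a b
  have hcomm :=
    ((commute_creationOp_pderiv (R := R) (zero_ne_one (α := Fin 2))).smul_left a).smul_right b
  rw [← one_mul (Polynomial.aeval _ _), ← creationOp_pow_apply hu (Derivation.map_one_eq_zero _),
    hsplit, hcomm.add_pow]
  simp only [LinearMap.sum_apply, Module.End.mul_apply, _root_.smul_pow, Module.End.natCast_apply]
  refine Finset.sum_congr rfl fun j _ => ?_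
  rw [LinearMap.smul_apply, LinearMap.smul_apply, map_nsmul, map_smul, map_nsmul,
    creationOp_pow_apply (pderiv_X_self 1) (Derivation.map_one_eq_zero _), one_mul,
    creationOp_pow_apply (pderiv_X_self 0) (pderiv_aeval_X_of_ne zero_ne_one _), mul_comm]
  module

end MvPolynomial

theorem Polynomial.aeval_hermite_mul_add_mul {R : Type*} [CommRing R] {a b : R}
    (hab : a ^ 2 + b ^ 2 = 1) (x y : R) (n : ℕ) :
    aeval (x * a + y * b) (hermite n) =
      ∑ j ∈ Finset.range (n + 1),
        (n.choose j : R) * a ^ j * b ^ (n - j) * aeval x (hermite j) * aeval y (hermite (n - j)) := by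
  have h := congrArg (MvPolynomial.aeval ![x, y])
    (MvPolynomial.aeval_hermite_smul_X_add_smul_X hab n)
  simp only [map_sum, map_smul, map_mul, ← aeval_algHom_apply] at h
  simp only [map_add, map_smul, MvPolynomial.aeval_X, Matrix.cons_val_zero, Matrix.cons_val_one,
    smul_eq_mul, ← algebraMap_int_eq, aeval_map_algebraMap] at h
  rw [mul_comm x, mul_comm y, h]
  exact Finset.sum_congr rfl fun j _ => by ring

/-- **Rotational invariance of Hermite polynomials.**
For every `n ≥ 0`, every real `θ`, and all real `x, y`,
`H_n(x cos θ + y sin θ) = Σ_{j=0}^{n} C(n,j) (cos θ)^j (sin θ)^{n−j} H_j(x) H_{n−j}(y)`. -/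
theorem hermite_rotation_invariance (n : ℕ) (θ x y : ℝ) :
    hermiteEval n (x * Real.cos θ + y * Real.sin θ) =
      ∑ j ∈ Finset.range (n + 1),
        (n.choose j : ℝ) * (Real.cos θ) ^ j * (Real.sin θ) ^ (n - j) *
          hermiteEval j x * hermiteEval (n - j) y :=
  aeval_hermite_mul_add_mul (Real.cos_sq_add_sin_sq θ) x y n
end
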